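/- Let C be a spherical fusion category with commutative Grothendieck ring generated by a simple object X, and let s ≥ 1/2 be rational. Suppose C is s-Isaacs: λ_s(μ_j, X) := (dim C)^s (dim C^j)^{1-s} μ_j([X])/dim(X) is an algebraic integer for all characters μ_j. Then (dim C)^{2s+1}/(|U(C)| · dim(X)²) is an algebraic integer. -/

import Mathlib

open scoped BigOperators

/-- A commutative fusion ring: nonnegative integer fusion coefficients on a basis
`x_0, ..., x_m` (`x_0` the unit), a duality involution, and Frobenius-Perron
dimensions `d i > 0`. -/
structure FusionData (m : ℕ) where
  N : Fin (m + 1) → Fin (m + 1) → Fin (m + 1) → ℕ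
  dual : Fin (m + 1) → Fin (m + 1)
  dual_invol : ∀ i, dual (dual i) = i
  N_comm : ∀ i j k, N i j k = N j i k
  N_assoc : ∀ i j l k, ∑ t, N i j t * N t l k = ∑ t, N j l t * N i t k
  N_one : ∀ j k, N 0 j k = if k = j then 1 else 0
  N_pair : ∀ i j, N i j 0 = if j = dual i then 1 else 0
  d : Fin (m + 1) → ℝ
  d_pos : ∀ i, 0 < d i
  d_one : d 0 = 1
  d_mul : ∀ i j, d i * d j = ∑ k, (N i j k : ℝ) * d k
  d_dual : ∀ i, d (dual i) = d i

/-- A character of the complexified fusion ring, given by its values on the basis. -/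
def IsChar {m : ℕ} (F : FusionData m) (μ : Fin (m + 1) → ℂ) : Prop :=
  μ 0 = 1 ∧
  (∀ i j, μ i * μ j = ∑ k, (F.N i j k : ℂ) * μ k) ∧
  (∀ i, μ (F.dual i) = starRingEnd ℂ (μ i)) ∧
  (∀ i, ‖μ i‖ ≤ F.d i)

/-- The dual `⋆` product: `(μ ⋆ ν)(x_k / d_k) = μ(x_k / d_k) · ν(x_k / d_k)`. -/
noncomputable def starProd {m : ℕ} (F : FusionData m) (μ ν : Fin (m + 1) → ℂ) :
    Fin (m + 1) → ℂ :=
  fun i => μ i * ν i / (F.d i : ℂ)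

/-- A group-like character: `μ ⋆ μ# = μ_0 = FPdim`, where `μ#` is the complex
conjugate character. -/
def IsGroupLike {m : ℕ} (F : FusionData m) (μ : Fin (m + 1) → ℂ) : Prop :=
  IsChar F μ ∧ ∀ i, starProd F μ (fun k => starRingEnd ℂ (μ k)) i = (F.d i : ℂ)

/-- The coefficient of the basis element `x_k` in the `n`-th power of `x_a`. -/
def powCoeff {m : ℕ} (F : FusionData m) (a : Fin (m + 1)) : ℕ → Fin (m + 1) → ℕ
  | 0, k => if k = 0 then 1 else 0
  | n + 1, k => ∑ l, powCoeff F a n l * F.N a l k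

/-!
Write `n_ν = ∑ i, |ν(x_i)|²`, so that `dim C^ν = dim C / n_ν`. Column orthogonality of the
character table gives `∑_ν |ν(X)|² / n_ν = 1`, hence
`(dim C)^{2s+1} / dim(X)² = ∑_ν λ_s(ν, X) λ_s(ν#, X) (dim C^ν)^{2s-1}`, a sum of algebraic
integers. The group-like characters form a group `U(C)` under `⋆`, acting on characters by `⋆`
without changing `|ν|`, so the summands are constant on orbits. A group-like `g` has
`g(x_k)/d_k` multiplicative along the fusion rules, hence determined by `g(X)` because `X`
generates; so the action is free on the characters with `ν(X) ≠ 0`, and the summands vanish on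
the others. The sum is therefore `|U(C)|` times a sum over orbit representatives.
-/

open scoped Matrix ComplexOrder

theorem Complex.eq_of_sum_mul_eq_sum_mul {ι : Type*} [Fintype ι] {c r : ι → ℝ} {z : ι → ℂ}
    (hc : ∀ k, 0 ≤ c k) (hz : ∀ k, ‖z k‖ ≤ r k)
    (hsum : ∑ k, (c k : ℂ) * z k = ∑ k, (c k : ℂ) * r k) {k : ι} (hk : c k ≠ 0) :
    z k = r k := by
  have hterm : ∀ l, 0 ≤ c l * (r l - (z l).re) :=
    fun l => mul_nonneg (hc l) (sub_nonneg.2 ((Complex.re_le_norm _).trans (hz l)))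
  have hre : ∑ l, c l * (r l - (z l).re) = 0 := by
    have h := congrArg Complex.re hsum
    simp only [Complex.re_sum, Complex.re_ofReal_mul, Complex.ofReal_re] at h
    simp only [mul_sub, Finset.sum_sub_distrib, h, sub_self]
  have hk' := (Finset.sum_eq_zero_iff_of_nonneg fun l _ => hterm l).1 hre k (Finset.mem_univ k)
  have hrk : (z k).re = r k := by
    rcases mul_eq_zero.1 hk' with h | h
    · exact absurd h hk
    · linarith
  have hnonneg : 0 ≤ z k :=
    Complex.re_eq_norm.1 (le_antisymm (Complex.re_le_norm _) (hrk ▸ hz k))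
  rw [← hrk]
  exact Complex.eq_re_of_ofReal_le (r := 0) (by simpa using hnonneg)

theorem Matrix.sum_normSq_div_eq_one {n : Type*} [Fintype n] [DecidableEq n] {A : Matrix n n ℂ}
    {r : n → ℝ} (hA : A * Aᴴ = Matrix.diagonal (fun j => (r j : ℂ))) (hr : ∀ j, r j ≠ 0) (a : n) :
    ∑ j, Complex.normSq (A j a) / r j = 1 := by
  have h : (Matrix.diagonal (fun j => ((r j)⁻¹ : ℂ)) * A) * Aᴴ = 1 := by
    rw [Matrix.mul_assoc, hA, Matrix.diagonal_mul_diagonal, ← Matrix.diagonal_one]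
    congr 1
    ext j
    exact inv_mul_cancel₀ (by exact_mod_cast hr j)
  have h' : (Aᴴ * (Matrix.diagonal (fun j => ((r j)⁻¹ : ℂ)) * A)) a a = 1 := by
    rw [mul_eq_one_comm.mp h, Matrix.one_apply_eq]
  rw [Matrix.mul_apply] at h'
  simp only [Matrix.diagonal_mul, Matrix.conjTranspose_apply] at h'
  have hterm : ∀ j,
      star (A j a) * ((r j : ℂ)⁻¹ * A j a) = ((Complex.normSq (A j a) / r j : ℝ) : ℂ) := by
    intro j
    rw [Complex.ofReal_div, Complex.normSq_eq_conj_mul_self, Complex.star_def]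
    ring
  exact_mod_cast (Finset.sum_congr rfl fun j _ => (hterm j).symm).trans h'

theorem Real.rpow_mul_rpow_one_sub_sq_mul {x y : ℝ} (hx : 0 ≤ x) (hy : 0 < y) (s : ℝ) :
    (x ^ s * y ^ (1 - s)) ^ 2 * y ^ (2 * s - 1) = x ^ (2 * s) * y := by
  rw [mul_pow, ← Real.rpow_mul_natCast hx, ← Real.rpow_mul_natCast hy.le, mul_assoc,
    ← Real.rpow_add hy, show (1 - s) * ((2 : ℕ) : ℝ) + (2 * s - 1) = 1 by push_cast; ring,
    Real.rpow_one, show s * ((2 : ℕ) : ℝ) = 2 * s by push_cast; ring]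

theorem isIntegral_sq_mul_normSq_div {A B x : ℝ} {z : ℂ} (h₁ : IsIntegral ℤ ((A : ℂ) * z / x))
    (h₂ : IsIntegral ℤ ((A : ℂ) * starRingEnd ℂ z / x)) (hB : IsIntegral ℤ B) :
    IsIntegral ℤ (A ^ 2 * B * Complex.normSq z / x ^ 2) := by
  have h : ((A ^ 2 * B * Complex.normSq z / x ^ 2 : ℝ) : ℂ)
      = (A * z / x) * (A * starRingEnd ℂ z / x) * (B : ℂ) := by
    push_cast
    rw [Complex.normSq_eq_conj_mul_self]
    ring
  have hℂ : IsIntegral ℤ ((A ^ 2 * B * Complex.normSq z / x ^ 2 : ℝ) : ℂ) :=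
    h ▸ (h₁.mul h₂).mul (hB.map (algebraMap ℝ ℂ).toIntAlgHom)
  exact (isIntegral_algHom_iff (algebraMap ℝ ℂ).toIntAlgHom Complex.ofReal_injective).1 hℂ

theorem MulAction.sum_orbit_eq_card_smul {G α M : Type*} [Group G] [MulAction G α]
    [AddCommMonoid M] (t : α → M) (ht : ∀ (g : G) x, t (g • x) = t x) (x : α)
    [Fintype (orbit G x)] (hfree : t x ≠ 0 → stabilizer G x = ⊥) :
    ∑ y : orbit G x, t y = Nat.card G • t x := by
  have hconst : ∀ y : orbit G x, t y = t x := fun ⟨_, g, rfl⟩ => ht g x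
  rw [Finset.sum_congr rfl fun y _ => hconst y, Finset.sum_const, Finset.card_univ]
  by_cases hx : t x = 0
  · simp [hx]
  · rw [← Subgroup.index_bot, ← hfree hx, index_stabilizer, ← Nat.card_coe_set_eq,
      Nat.card_eq_fintype_card]

theorem MulAction.exists_sum_eq_card_smul_sum {G α M : Type*} [Group G] [MulAction G α]
    [Fintype α] [AddCommMonoid M] (t : α → M) (ht : ∀ (g : G) x, t (g • x) = t x)
    (hfree : ∀ x, t x ≠ 0 → stabilizer G x = ⊥) :
    ∃ s : Finset α, ∑ x, t x = Nat.card G • ∑ x ∈ s, t x := by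
  classical
  refine ⟨Finset.univ.image fun ω : orbitRel.Quotient G α => ω.out, ?_⟩
  rw [Finset.sum_image fun _ _ _ _ h => Quotient.out_injective h, Finset.smul_sum,
    ← (selfEquivSigmaOrbits G α).symm.sum_comp, Fintype.sum_sigma]
  exact Finset.sum_congr rfl fun ω _ => sum_orbit_eq_card_smul t ht _ (hfree _)

namespace FusionData

variable {m : ℕ} (F : FusionData m)

theorem dual_involutive : Function.Involutive F.dual := F.dual_invol

theorem N_zero_eq (t l : Fin (m + 1)) : F.N t l 0 = if t = F.dual l then 1 else 0 := by
  simp only [F.N_pair, eq_comm (a := l), F.dual_involutive.eq_iff]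

/-- Frobenius reciprocity. -/
theorem N_dual_eq (i j l : Fin (m + 1)) : F.N i j (F.dual l) = F.N j l (F.dual i) := by
  simpa [N_zero_eq F _ l, F.N_pair i] using F.N_assoc i j l 0

theorem N_dual_comm (b i t : Fin (m + 1)) : F.N b (F.dual i) t = F.N b (F.dual t) i := by
  conv_lhs => rw [← F.dual_invol t]
  conv_rhs => rw [← F.dual_invol i]
  rw [F.N_dual_eq, F.N_dual_eq, F.N_comm]

theorem d_ofReal_ne_zero (i : Fin (m + 1)) : (F.d i : ℂ) ≠ 0 :=
  Complex.ofReal_ne_zero.2 (F.d_pos i).ne'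

theorem isChar_d : IsChar F (fun i => (F.d i : ℂ)) := by
  refine ⟨by simp [F.d_one], fun i j => ?_, fun i => by simp [F.d_dual], fun i => ?_⟩
  · beta_reduce; exact_mod_cast F.d_mul i j
  · simp [abs_of_pos (F.d_pos i)]

end FusionData

namespace IsChar

variable {m : ℕ} {F : FusionData m} {ν χ : Fin (m + 1) → ℂ}

theorem conj (h : IsChar F ν) : IsChar F (fun i => starRingEnd ℂ (ν i)) := by
  obtain ⟨h0, hmul, hdual, hnorm⟩ := h
  refine ⟨by simp [h0], fun i j => ?_, fun i => by simp [hdual], fun i => by simpa using hnorm i⟩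
  rw [← map_mul, hmul, map_sum]
  simp

theorem sum_N_mul_conj (h : IsChar F ν) (b t : Fin (m + 1)) :
    ∑ i, (F.N b i t : ℂ) * starRingEnd ℂ (ν i) = ν b * starRingEnd ℂ (ν t) := by
  rw [← F.dual_involutive.bijective.sum_comp, ← h.2.2.1 t, h.2.1]
  simp only [F.N_dual_comm b _ t, h.2.2.1, Complex.conj_conj]

theorem apply_mul_sum_conj_mul (hν : IsChar F ν) (hχ : IsChar F χ) (b : Fin (m + 1)) :
    χ b * ∑ i, starRingEnd ℂ (ν i) * χ i = ν b * ∑ i, starRingEnd ℂ (ν i) * χ i := by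
  have h : ∀ i, χ b * (starRingEnd ℂ (ν i) * χ i)
      = ∑ t, (F.N b i t : ℂ) * starRingEnd ℂ (ν i) * χ t := fun i => by
    rw [mul_left_comm, hχ.2.1, Finset.mul_sum]
    exact Finset.sum_congr rfl fun _ _ => by ring
  rw [Finset.mul_sum, Finset.sum_congr rfl fun i _ => h i, Finset.sum_comm, Finset.mul_sum]
  refine Finset.sum_congr rfl fun t _ => ?_
  rw [← Finset.sum_mul, hν.sum_N_mul_conj, mul_assoc]

theorem sum_conj_mul_eq_zero (hν : IsChar F ν) (hχ : IsChar F χ) (hne : ν ≠ χ) :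
    ∑ i, starRingEnd ℂ (ν i) * χ i = 0 := by
  obtain ⟨b, hb⟩ := Function.ne_iff.mp hne
  by_contra hS
  exact hb (mul_right_cancel₀ hS (apply_mul_sum_conj_mul hν hχ b)).symm

theorem sum_normSq_pos (h : IsChar F ν) : 0 < ∑ i, Complex.normSq (ν i) :=
  Finset.sum_pos' (fun i _ => Complex.normSq_nonneg _) ⟨0, Finset.mem_univ 0, by simp [h.1]⟩

end IsChar

theorem sum_normSq_div_eq_one_of_isChar {m : ℕ} {F : FusionData m}
    {μ : Fin (m + 1) → Fin (m + 1) → ℂ} (hchar : ∀ j, IsChar F (μ j))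
    (hinj : Function.Injective μ) (a : Fin (m + 1)) :
    ∑ j, Complex.normSq (μ j a) / ∑ i, Complex.normSq (μ j i) = 1 := by
  refine Matrix.sum_normSq_div_eq_one (A := Matrix.of μ) ?_
    (fun j => (hchar j).sum_normSq_pos.ne') a
  ext j k
  rw [Matrix.mul_apply, Matrix.diagonal_apply]
  simp only [Matrix.conjTranspose_apply, Matrix.of_apply, Complex.star_def]
  split_ifs with h
  · subst h
    push_cast
    simp [Complex.mul_conj]
  · rw [← (hchar k).sum_conj_mul_eq_zero (hchar j) (hinj.ne (Ne.symm h))]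
    simp only [mul_comm]

section IsGroupLike

variable {m : ℕ} {F : FusionData m} {g ν : Fin (m + 1) → ℂ}

theorem isGroupLike_iff_norm_eq : IsGroupLike F g ↔ IsChar F g ∧ ∀ i, ‖g i‖ = F.d i := by
  refine and_congr_right fun _ => forall_congr' fun i => ?_
  rw [starProd, Complex.mul_conj, Complex.normSq_eq_norm_sq, div_eq_iff (F.d_ofReal_ne_zero i),
    ← Complex.ofReal_mul, ← sq, Complex.ofReal_inj]
  exact sq_eq_sq₀ (norm_nonneg _) (F.d_pos i).le

theorem IsGroupLike.norm_eq (hg : IsGroupLike F g) (i : Fin (m + 1)) : ‖g i‖ = F.d i :=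
  (isGroupLike_iff_norm_eq.1 hg).2 i

/-- Equality case of the triangle inequality for `g_i g_j = ∑_k N_ij^k g_k`, given
`‖g_k‖ = d_k` and `d_i d_j = ∑_k N_ij^k d_k`. -/
theorem IsGroupLike.apply_div_eq (hg : IsGroupLike F g) {i j k : Fin (m + 1)}
    (hN : F.N i j k ≠ 0) : g k / F.d k = g i / F.d i * (g j / F.d j) := by
  set u := g i / F.d i * (g j / F.d j)
  have hu : ‖u‖ = 1 := by
    simp [u, hg.norm_eq, abs_of_pos (F.d_pos i), abs_of_pos (F.d_pos j), (F.d_pos i).ne',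
      (F.d_pos j).ne']
  have hu0 : u ≠ 0 := norm_ne_zero_iff.1 (hu ▸ one_ne_zero)
  have hsum : ∑ l, ((F.N i j l : ℝ) : ℂ) * (g l / u) = ∑ l, ((F.N i j l : ℝ) : ℂ) * F.d l := by
    have hdi := F.d_ofReal_ne_zero i
    have hdj := F.d_ofReal_ne_zero j
    simp only [Complex.ofReal_natCast, mul_div_assoc', ← Finset.sum_div, ← hg.1.2.1]
    have hd : ∑ l, (F.N i j l : ℂ) * F.d l = F.d i * F.d j := by exact_mod_cast (F.d_mul i j).symm
    rw [div_eq_iff hu0, hd]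
    simp only [u]
    field_simp
  have hk := Complex.eq_of_sum_mul_eq_sum_mul (fun l => Nat.cast_nonneg _)
    (fun l => by rw [norm_div, hu, div_one, hg.norm_eq]) hsum (Nat.cast_ne_zero.2 hN)
  rw [div_eq_iff hu0] at hk
  rw [hk, mul_div_cancel_left₀ _ (F.d_ofReal_ne_zero k)]

theorem IsGroupLike.apply_div_eq_pow (hg : IsGroupLike F g) (a : Fin (m + 1)) (n : ℕ)
    {k : Fin (m + 1)} (hk : powCoeff F a n k ≠ 0) : g k / F.d k = (g a / F.d a) ^ n := by
  induction n generalizing k with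
  | zero =>
    obtain rfl : k = 0 := by by_contra h; simp [powCoeff, h] at hk
    simp [hg.1.1, F.d_one]
  | succ n ih =>
    obtain ⟨l, -, hl⟩ := Finset.exists_ne_zero_of_sum_ne_zero hk
    rw [hg.apply_div_eq (right_ne_zero_of_mul hl), ih (left_ne_zero_of_mul hl), pow_succ']

theorem IsGroupLike.eq_d_of_apply_eq (hg : IsGroupLike F g) {a : Fin (m + 1)}
    (hgen : ∀ k, ∃ n, powCoeff F a n k ≠ 0) (ha : g a = F.d a) : g = fun i => (F.d i : ℂ) := by
  funext k
  obtain ⟨n, hn⟩ := hgen k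
  have h := hg.apply_div_eq_pow a n hn
  rwa [ha, div_self (F.d_ofReal_ne_zero a), one_pow, div_eq_one_iff_eq (F.d_ofReal_ne_zero k)] at h

theorem starProd_comm (F : FusionData m) (g ν : Fin (m + 1) → ℂ) :
    starProd F g ν = starProd F ν g := by
  funext i
  simp only [starProd, mul_comm]

theorem starProd_assoc (F : FusionData m) (g h ν : Fin (m + 1) → ℂ) :
    starProd F (starProd F g h) ν = starProd F g (starProd F h ν) := by
  funext i
  simp only [starProd]
  field_simp

theorem d_starProd (F : FusionData m) (ν : Fin (m + 1) → ℂ) :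
    starProd F (fun i => (F.d i : ℂ)) ν = ν := by
  funext i
  simp only [starProd]
  field_simp [F.d_ofReal_ne_zero i]

theorem IsGroupLike.norm_starProd (hg : IsGroupLike F g) (ν : Fin (m + 1) → ℂ) (i : Fin (m + 1)) :
    ‖starProd F g ν i‖ = ‖ν i‖ := by
  simp [starProd, hg.norm_eq, abs_of_pos (F.d_pos i), (F.d_pos i).ne']

theorem IsGroupLike.normSq_starProd (hg : IsGroupLike F g) (ν : Fin (m + 1) → ℂ)
    (i : Fin (m + 1)) : Complex.normSq (starProd F g ν i) = Complex.normSq (ν i) := by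
  rw [Complex.normSq_eq_norm_sq, Complex.normSq_eq_norm_sq, hg.norm_starProd]

theorem IsGroupLike.starProd_isChar (hg : IsGroupLike F g) (hν : IsChar F ν) :
    IsChar F (starProd F g ν) := by
  refine ⟨by simp [starProd, hg.1.1, hν.1, F.d_one], fun i j => ?_, fun i => ?_,
    fun i => hg.norm_starProd ν i ▸ hν.2.2.2 i⟩
  · have hk : ∀ k, (F.N i j k : ℂ) * starProd F g ν k
        = g i / F.d i * (g j / F.d j) * ((F.N i j k : ℂ) * ν k) := fun k => by
      rcases eq_or_ne (F.N i j k) 0 with h | h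
      · simp [h]
      · rw [starProd, mul_div_right_comm, ← hg.apply_div_eq h]
        ring
    rw [Finset.sum_congr rfl fun k _ => hk k, ← Finset.mul_sum, ← hν.2.1]
    simp only [starProd]
    ring
  · simp [starProd, hg.1.2.2.1, hν.2.2.1, F.d_dual]

theorem IsGroupLike.starProd (hg : IsGroupLike F g) {h : Fin (m + 1) → ℂ}
    (hh : IsGroupLike F h) : IsGroupLike F (starProd F g h) :=
  isGroupLike_iff_norm_eq.2
    ⟨hg.starProd_isChar hh.1, fun i => (hg.norm_starProd h i).trans (hh.norm_eq i)⟩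

theorem IsGroupLike.conj (hg : IsGroupLike F g) :
    IsGroupLike F (fun i => starRingEnd ℂ (g i)) :=
  isGroupLike_iff_norm_eq.2 ⟨hg.1.conj, fun i => (Complex.norm_conj _).trans (hg.norm_eq i)⟩

theorem isGroupLike_d (F : FusionData m) : IsGroupLike F (fun i => (F.d i : ℂ)) :=
  isGroupLike_iff_norm_eq.2 ⟨F.isChar_d, fun i => by simp [abs_of_pos (F.d_pos i)]⟩

end IsGroupLike

namespace FusionData

variable {m : ℕ} (F : FusionData m)

/-- The group `U(C)` of group-like characters, under `⋆`. -/
abbrev GroupLike : Type := {g : Fin (m + 1) → ℂ // IsGroupLike F g}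

abbrev Character : Type := {ν : Fin (m + 1) → ℂ // IsChar F ν}

namespace GroupLike

variable {F}

instance : One F.GroupLike := ⟨⟨_, isGroupLike_d F⟩⟩

noncomputable instance : Mul F.GroupLike := ⟨fun g h => ⟨starProd F g.1 h.1, g.2.starProd h.2⟩⟩

instance : Inv F.GroupLike := ⟨fun g => ⟨_, g.2.conj⟩⟩

noncomputable instance : Group F.GroupLike :=
  Group.ofLeftAxioms (fun g h k => Subtype.ext (starProd_assoc F g.1 h.1 k.1))
    (fun g => Subtype.ext (d_starProd F g.1))
    (fun g => Subtype.ext ((starProd_comm F _ _).trans (funext g.2.2)))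

noncomputable instance : MulAction F.GroupLike F.Character where
  smul g ν := ⟨starProd F g.1 ν.1, g.2.starProd_isChar ν.2⟩
  one_smul ν := Subtype.ext (d_starProd F ν.1)
  mul_smul g h ν := Subtype.ext (starProd_assoc F g.1 h.1 ν.1)

@[simp]
theorem smul_val (g : F.GroupLike) (ν : F.Character) : (g • ν).1 = starProd F g.1 ν.1 := rfl

theorem stabilizer_eq_bot {a : Fin (m + 1)} (hgen : ∀ k, ∃ n, powCoeff F a n k ≠ 0)
    {ν : F.Character} (hν : ν.1 a ≠ 0) : MulAction.stabilizer F.GroupLike ν = ⊥ := by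
  refine (Subgroup.eq_bot_iff_forall _).2 fun g hg => Subtype.ext (g.2.eq_d_of_apply_eq hgen ?_)
  have h := congrFun (congrArg Subtype.val (MulAction.mem_stabilizer_iff.1 hg)) a
  rw [smul_val, starProd, div_eq_iff (F.d_ofReal_ne_zero a), mul_comm (ν.1 a)] at h
  exact mul_right_cancel₀ hν h

theorem natCard_isGroupLike_eq {μ : Fin (m + 1) → Fin (m + 1) → ℂ} (hinj : Function.Injective μ)
    (hall : ∀ ν, IsChar F ν → ∃ j, μ j = ν) :
    Nat.card {j // IsGroupLike F (μ j)} = Nat.card F.GroupLike :=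
  Nat.card_congr <| Equiv.ofBijective (fun j => ⟨μ j.1, j.2⟩)
    ⟨fun _ _ h => Subtype.ext (hinj (congrArg Subtype.val h)),
      fun g => (hall g.1 g.2.1).elim fun j hj => ⟨⟨j, hj ▸ g.2⟩, Subtype.ext hj⟩⟩

instance [Finite F.Character] : Finite F.GroupLike :=
  Finite.of_injective (fun g => (⟨g.1, g.2.1⟩ : F.Character))
    fun _ _ h => Subtype.ext (congrArg (fun ν : F.Character => ν.1) h)

end GroupLike

variable {F}

noncomputable def equivCharacter {μ : Fin (m + 1) → Fin (m + 1) → ℂ}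
    (hchar : ∀ j, IsChar F (μ j)) (hinj : Function.Injective μ)
    (hall : ∀ ν, IsChar F ν → ∃ j, μ j = ν) : Fin (m + 1) ≃ F.Character :=
  Equiv.ofBijective (fun j => ⟨μ j, hchar j⟩)
    ⟨fun _ _ h => hinj (congrArg Subtype.val h), fun ν => (hall ν.1 ν.2).imp fun _ => Subtype.ext⟩

end FusionData

section IsaacsTerm

variable {m : ℕ} {F : FusionData m} (D s x : ℝ) (a : Fin (m + 1))

/-- `λ_s(ν, X) λ_s(ν#, X) (dim C^ν)^{2s-1}` with `dim C = D`, `dim X = x`, `X = x_a`. -/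
noncomputable def isaacsTerm (ν : Fin (m + 1) → ℂ) : ℝ :=
  (D ^ s * (D / ∑ i, Complex.normSq (ν i)) ^ (1 - s)) ^ 2 *
    (D / ∑ i, Complex.normSq (ν i)) ^ (2 * s - 1) * Complex.normSq (ν a) / x ^ 2

variable {D s x a}

theorem isaacsTerm_eq_zero {ν : Fin (m + 1) → ℂ} (h : ν a = 0) : isaacsTerm D s x a ν = 0 := by
  simp [isaacsTerm, h]

theorem isaacsTerm_starProd {g : Fin (m + 1) → ℂ} (hg : IsGroupLike F g) (ν : Fin (m + 1) → ℂ) :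
    isaacsTerm D s x a (starProd F g ν) = isaacsTerm D s x a ν := by
  simp only [isaacsTerm, hg.normSq_starProd]

theorem sum_isaacsTerm {μ : Fin (m + 1) → Fin (m + 1) → ℂ} (hchar : ∀ j, IsChar F (μ j))
    (hinj : Function.Injective μ) (hD : 0 < D) :
    ∑ j, isaacsTerm D s x a (μ j) = D ^ (2 * s + 1) / x ^ 2 := by
  have ht : ∀ j, isaacsTerm D s x a (μ j) = D ^ (2 * s + 1) / x ^ 2 *
      (Complex.normSq (μ j a) / ∑ i, Complex.normSq (μ j i)) := fun j => by
    rw [isaacsTerm, Real.rpow_mul_rpow_one_sub_sq_mul hD.le (div_pos hD (hchar j).sum_normSq_pos),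
      Real.rpow_add_one hD.ne']
    field_simp
  rw [Finset.sum_congr rfl fun j _ => ht j, ← Finset.mul_sum,
    sum_normSq_div_eq_one_of_isChar hchar hinj a, mul_one]

end IsaacsTerm

theorem isaacs_s_divisibility_general {m : ℕ} (F : FusionData m)
    (a : Fin (m + 1)) (hgen : ∀ k, ∃ n, powCoeff F a n k ≠ 0)
    (μ : Fin (m + 1) → Fin (m + 1) → ℂ)
    (hchar : ∀ j, IsChar F (μ j)) (hinj : Function.Injective μ)
    (hall : ∀ ν, IsChar F ν → ∃ j, μ j = ν)
    (dims : Fin (m + 1) → ℝ)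
    (hdimpos : 0 < ∑ i, dims i ^ 2)
    (s : ℚ)
    (hIsaacs : ∀ j, IsIntegral ℤ
      ((((∑ i, dims i ^ 2) ^ (s : ℝ) *
          ((∑ i, dims i ^ 2) / (∑ i, Complex.normSq (μ j i))) ^ ((1 : ℝ) - (s : ℝ)) : ℝ) : ℂ) *
        μ j a / (dims a : ℂ)))
    (hCj : ∀ j, IsIntegral ℤ
      ((((∑ i, dims i ^ 2) / (∑ i, Complex.normSq (μ j i))) ^ (2 * (s : ℝ) - 1) : ℝ))) :
    IsIntegral ℤ (((∑ i, dims i ^ 2) ^ (2 * (s : ℝ) + 1) /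
      ((Nat.card {j : Fin (m + 1) // IsGroupLike F (μ j)} : ℝ) * dims a ^ 2) : ℝ)) := by
  set D := ∑ i, dims i ^ 2
  let e := FusionData.equivCharacter hchar hinj hall
  let _ : Fintype F.Character := Fintype.ofEquiv _ e
  let t : F.Character → ℝ := fun ν => isaacsTerm D s (dims a) a ν.1
  have ht_int : ∀ ν, IsIntegral ℤ (t ν) := by
    rintro ⟨ν, hν⟩
    obtain ⟨j, rfl⟩ := hall ν hν
    obtain ⟨j', hj'⟩ := hall _ hν.conj
    have h' := hIsaacs j'
    simp only [hj', Complex.normSq_conj] at h'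
    exact isIntegral_sq_mul_normSq_div (hIsaacs j) h' (hCj j)
  have ht_sum : ∑ ν, t ν = D ^ (2 * (s : ℝ) + 1) / dims a ^ 2 := by
    rw [← e.sum_comp]
    exact sum_isaacsTerm hchar hinj hdimpos
  have ht_smul : ∀ (g : F.GroupLike) ν, t (g • ν) = t ν := fun g ν => by
    simp only [t, FusionData.GroupLike.smul_val]
    exact isaacsTerm_starProd g.2 ν.1
  have ht_free : ∀ ν, t ν ≠ 0 → MulAction.stabilizer F.GroupLike ν = ⊥ :=
    fun ν hν => FusionData.GroupLike.stabilizer_eq_bot hgen fun h => hν (isaacsTerm_eq_zero h)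
  obtain ⟨S, hS⟩ := MulAction.exists_sum_eq_card_smul_sum t ht_smul ht_free
  rw [FusionData.GroupLike.natCard_isGroupLike_eq hinj hall, mul_comm (Nat.card F.GroupLike : ℝ),
    ← div_div, ← ht_sum, hS, nsmul_eq_mul, mul_div_cancel_left₀ _ (Nat.cast_ne_zero.2 Nat.card_pos.ne')]
  exact IsIntegral.sum _ fun ν _ => ht_int ν

/-- A spherical fusion category with commutative Grothendieck ring generated by
a simple object `X = x_a`, with (real) quantum dimensions `dims`, which is
`s`-Isaacs for a rational `s ≥ 1/2`: every
`λ_s(μ_j, X) = (dim C)^s (dim C^j)^{1-s} μ_j([X])/dim X` is an algebraic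
integer (and the algebraic integers `dim C^j = dim C/n_j` have
`(dim C^j)^{2s-1}` an algebraic integer).  Then
`(dim C)^{2s+1}/(|U(C)|·dim(X)²)` is an algebraic integer. -/
theorem isaacs_s_divisibility {m : ℕ} (F : FusionData m)
    (a : Fin (m + 1)) (hgen : ∀ k, ∃ n, powCoeff F a n k ≠ 0)
    (μ : Fin (m + 1) → Fin (m + 1) → ℂ)
    (hchar : ∀ j, IsChar F (μ j)) (hinj : Function.Injective μ)
    (hall : ∀ ν, IsChar F ν → ∃ j, μ j = ν)
    (h0 : μ 0 = fun i => (F.d i : ℂ))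
    (dims : Fin (m + 1) → ℝ) (hd0 : dims 0 = 1)
    (hdmul : ∀ i j, dims i * dims j = ∑ k, (F.N i j k : ℝ) * dims k)
    (hddual : ∀ i, dims (F.dual i) = dims i) (hda : dims a ≠ 0)
    (hdimpos : 0 < ∑ i, dims i ^ 2)
    (s : ℚ) (hs : (1 : ℚ) / 2 ≤ s)
    (hIsaacs : ∀ j, IsIntegral ℤ
      ((((∑ i, dims i ^ 2) ^ (s : ℝ) *
          ((∑ i, dims i ^ 2) / (∑ i, Complex.normSq (μ j i))) ^ ((1 : ℝ) - (s : ℝ)) : ℝ) : ℂ) *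
        μ j a / (dims a : ℂ)))
    (hCj : ∀ j, IsIntegral ℤ
      ((((∑ i, dims i ^ 2) / (∑ i, Complex.normSq (μ j i))) ^ (2 * (s : ℝ) - 1) : ℝ))) :
    IsIntegral ℤ (((∑ i, dims i ^ 2) ^ (2 * (s : ℝ) + 1) /
      ((Nat.card {j : Fin (m + 1) // IsGroupLike F (μ j)} : ℝ) * dims a ^ 2) : ℝ)) :=
  isaacs_s_divisibility_general F a hgen μ hchar hinj hall dims hdimpos s hIsaacs hCj
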